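/- (Easy direction of Lax–Richtmyer, abstract form) Let X be a normed space, E(t) : X → X (t ∈ [0,T]) a family of bounded linear operators with ‖E(t)‖ ≤ K, and C_Δt : X → X bounded linear operators. Suppose the scheme is stable: there is L > 0 with ‖C_Δt^n‖ ≤ L for all Δt > 0, n ∈ ℕ with nΔt ≤ T. Suppose further consistency holds on a dense subspace D: for every u ∈ D, sup_{t, t+Δt ∈ [0,T]} ‖C_Δt E(t) u − E(t+Δt) u‖ / Δt → 0 as Δt → 0, and t ↦ E(t)u is continuous. Then for every u ∈ X, ‖C_Δt^n u − E(t) u‖ → 0 as Δt → 0, n → ∞ with nΔt → t, uniformly for t ∈ [0,T]. No completeness of X is required. -/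
import Mathlib


open Filter Set

set_option maxHeartbeats 1000000 in
/-- Easy direction of the Lax–Richtmyer theorem, abstract form: a stable scheme
that is consistent (on a dense subspace) with a uniformly bounded solution family
`E(t)` is convergent, and no completeness of the normed space `X` is required. -/
theorem stable_consistent_implies_convergent
    {X : Type*} [NormedAddCommGroup X] [NormedSpace ℝ X]
    (D : Submodule ℝ X) (hD : Dense (D : Set X))
    (T K L : ℝ) (hT : 0 < T) (hK : 0 < K) (hL : 0 < L)
    (E : ℝ → X →L[ℝ] X) (C : ℝ → X →L[ℝ] X)
    (hE0 : E 0 = ContinuousLinearMap.id ℝ X)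
    (hEbound : ∀ t ∈ Icc (0 : ℝ) T, ‖E t‖ ≤ K)
    (hEcont : ∀ u ∈ D, ContinuousOn (fun t => E t u) (Icc (0 : ℝ) T))
    -- stability: the powers of the scheme are uniformly bounded
    (hstab : ∀ Δt : ℝ, 0 < Δt → ∀ n : ℕ, (n : ℝ) * Δt ≤ T → ‖(C Δt) ^ n‖ ≤ L)
    -- consistency on the dense subspace D
    (hcons : ∀ u ∈ D, ∀ ε > (0 : ℝ), ∃ θ > (0 : ℝ), ∀ Δt : ℝ, 0 < Δt → Δt ≤ θ →
      ∀ t ∈ Icc (0 : ℝ) T, t + Δt ≤ T →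
        ‖C Δt (E t u) - E (t + Δt) u‖ ≤ ε * Δt) :
    -- convergence, for every initial value in X
    ∀ u : X, ∀ ε > (0 : ℝ), ∃ δ > (0 : ℝ), ∀ t ∈ Icc (0 : ℝ) T, ∀ Δt : ℝ, 0 < Δt →
      ∀ n : ℕ, (n : ℝ) * Δt ≤ T → Δt ≤ δ → |t - n * Δt| ≤ δ →
        ‖((C Δt) ^ n) u - E t u‖ ≤ ε := by
  intro u ε hε
  have hLK : (0 : ℝ) < L + K := by linarith
  -- choose v ∈ D close to u
  obtain ⟨v, hvD, hv⟩ : ∃ v ∈ (D : Set X), ‖u - v‖ ≤ ε / (4 * (L + K)) := by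
    obtain ⟨v, hv1, hv2⟩ := hD.exists_dist_lt u (show (0:ℝ) < ε / (4 * (L + K)) by positivity)
    exact ⟨v, hv1, by rw [dist_eq_norm] at hv2; exact hv2.le⟩
  -- consistency parameter
  have hLT1 : (0 : ℝ) < L * T + 1 := by positivity
  set ε₁ : ℝ := ε / (4 * (L * T + 1)) with hε₁def
  have hε₁ : 0 < ε₁ := by positivity
  obtain ⟨θ, hθ, hconsθ⟩ := hcons v hvD ε₁ hε₁
  -- uniform continuity of t ↦ E t v on [0,T]
  have huc : UniformContinuousOn (fun t => E t v) (Icc (0 : ℝ) T) :=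
    isCompact_Icc.uniformContinuousOn_of_continuous (hEcont v hvD)
  obtain ⟨δ₂, hδ₂, hucδ⟩ := Metric.uniformContinuousOn_iff_le.mp huc (ε / 4) (by positivity)
  refine ⟨min θ δ₂, lt_min hθ hδ₂, ?_⟩
  intro t ht Δt hΔt n hnT hΔtδ htn
  have hΔtθ : Δt ≤ θ := hΔtδ.trans (min_le_left _ _)
  have htnδ₂ : |t - n * Δt| ≤ δ₂ := htn.trans (min_le_right _ _)
  have hnΔt_mem : (n : ℝ) * Δt ∈ Icc (0 : ℝ) T :=
    ⟨by positivity, hnT⟩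
  -- telescoping bound on the dense element
  have key : ‖((C Δt) ^ n) v - E ((n : ℝ) * Δt) v‖ ≤ (n : ℝ) * (L * (ε₁ * Δt)) := by
    set a : ℕ → X := fun j => ((C Δt) ^ (n - j)) (E ((j : ℝ) * Δt) v) with ha
    have ha0 : a 0 = ((C Δt) ^ n) v := by
      simp [ha, hE0]
    have han : a n = E ((n : ℝ) * Δt) v := by
      simp [ha]
    have hsum : ∑ i ∈ Finset.range n, (a (i + 1) - a i) = a n - a 0 :=
      Finset.sum_range_sub a n
    have hbound : ∀ i ∈ Finset.range n,
        ‖a (i + 1) - a i‖ ≤ L * (ε₁ * Δt) := by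
      intro i hi
      rw [Finset.mem_range] at hi
      have hni : n - i = (n - (i + 1)) + 1 := by omega
      have hai : a i = ((C Δt) ^ (n - (i + 1))) ((C Δt) (E ((i : ℝ) * Δt) v)) := by
        rw [ha]
        simp only
        rw [hni, pow_succ]
        rfl
      have hrw : a (i + 1) - a i
          = ((C Δt) ^ (n - (i + 1))) (E (((i : ℝ) + 1) * Δt) v - (C Δt) (E ((i : ℝ) * Δt) v)) := by
        rw [hai, ha]
        simp only [map_sub]
        push_cast
        ring_nf
      rw [hrw]
      have hiT : (i : ℝ) * Δt ∈ Icc (0 : ℝ) T := by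
        constructor
        · positivity
        · have : (i : ℝ) * Δt ≤ (n : ℝ) * Δt := by
            have : (i : ℝ) ≤ (n : ℝ) := by exact_mod_cast hi.le
            nlinarith
          linarith
      have hi1T : (i : ℝ) * Δt + Δt ≤ T := by
        have : ((i : ℝ) + 1) * Δt ≤ (n : ℝ) * Δt := by
          have : (i : ℝ) + 1 ≤ (n : ℝ) := by exact_mod_cast hi
          nlinarith
        nlinarith
      have hc := hconsθ Δt hΔt hΔtθ ((i : ℝ) * Δt) hiT hi1T
      have hc' : ‖E (((i : ℝ) + 1) * Δt) v - (C Δt) (E ((i : ℝ) * Δt) v)‖ ≤ ε₁ * Δt := by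
        rw [norm_sub_rev]
        have : (i : ℝ) * Δt + Δt = ((i : ℝ) + 1) * Δt := by ring
        rwa [this] at hc
      have hpow : ‖(C Δt) ^ (n - (i + 1))‖ ≤ L := by
        apply hstab Δt hΔt
        have h1 : ((n - (i + 1) : ℕ) : ℝ) ≤ (n : ℝ) := by
          exact_mod_cast Nat.sub_le n (i + 1)
        nlinarith
      calc ‖((C Δt) ^ (n - (i + 1))) (E (((i : ℝ) + 1) * Δt) v - (C Δt) (E ((i : ℝ) * Δt) v))‖
          ≤ ‖(C Δt) ^ (n - (i + 1))‖ * ‖E (((i : ℝ) + 1) * Δt) v - (C Δt) (E ((i : ℝ) * Δt) v)‖ :=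
            ContinuousLinearMap.le_opNorm _ _
        _ ≤ L * (ε₁ * Δt) := by
            apply mul_le_mul hpow hc' (norm_nonneg _) hL.le
    calc ‖((C Δt) ^ n) v - E ((n : ℝ) * Δt) v‖
        = ‖a n - a 0‖ := by rw [ha0, han, norm_sub_rev]
      _ = ‖∑ i ∈ Finset.range n, (a (i + 1) - a i)‖ := by rw [hsum]
      _ ≤ ∑ i ∈ Finset.range n, ‖a (i + 1) - a i‖ := norm_sum_le _ _
      _ ≤ ∑ _i ∈ Finset.range n, (L * (ε₁ * Δt)) := Finset.sum_le_sum hbound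
      _ = (n : ℝ) * (L * (ε₁ * Δt)) := by
          rw [Finset.sum_const, Finset.card_range, nsmul_eq_mul]
  have key2 : ‖((C Δt) ^ n) v - E ((n : ℝ) * Δt) v‖ ≤ ε / 4 := by
    have h1 : (n : ℝ) * (L * (ε₁ * Δt)) = L * ε₁ * ((n : ℝ) * Δt) := by ring
    have h2 : L * ε₁ * ((n : ℝ) * Δt) ≤ L * ε₁ * T := by
      apply mul_le_mul_of_nonneg_left hnT (by positivity)
    have h4 : ε₁ * (L * T + 1) = ε / 4 := by
      rw [hε₁def]; field_simp
    have h3 : L * ε₁ * T ≤ ε / 4 := by nlinarith [hε₁]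
    linarith [key]
  -- uniform continuity bound
  have key3 : ‖E ((n : ℝ) * Δt) v - E t v‖ ≤ ε / 4 := by
    have := hucδ ((n : ℝ) * Δt) hnΔt_mem t ht (by
      rw [Real.dist_eq, abs_sub_comm]; exact htnδ₂)
    rwa [dist_eq_norm] at this
  -- approximation bounds
  have key1 : ‖((C Δt) ^ n) u - ((C Δt) ^ n) v‖ ≤ ε / 4 := by
    have h := ContinuousLinearMap.le_opNorm ((C Δt) ^ n) (u - v)
    rw [map_sub] at h
    have hpow := hstab Δt hΔt n hnT
    have : ‖((C Δt) ^ n) u - ((C Δt) ^ n) v‖ ≤ L * (ε / (4 * (L + K))) := by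
      calc ‖((C Δt) ^ n) u - ((C Δt) ^ n) v‖ ≤ ‖(C Δt) ^ n‖ * ‖u - v‖ := h
        _ ≤ L * (ε / (4 * (L + K))) := mul_le_mul hpow hv (norm_nonneg _) hL.le
    calc ‖((C Δt) ^ n) u - ((C Δt) ^ n) v‖ ≤ L * (ε / (4 * (L + K))) := this
      _ ≤ ε / 4 := by
          have hfrac : (L + K) * (ε / (4 * (L + K))) = ε / 4 := by field_simp
          have hq : (0:ℝ) ≤ ε / (4 * (L + K)) := by positivity
          nlinarith [mul_le_mul_of_nonneg_right (show L ≤ L + K by linarith) hq]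
  have key4 : ‖E t v - E t u‖ ≤ ε / 4 := by
    have h := ContinuousLinearMap.le_opNorm (E t) (v - u)
    rw [map_sub] at h
    calc ‖E t v - E t u‖ ≤ ‖E t‖ * ‖v - u‖ := h
      _ ≤ K * (ε / (4 * (L + K))) := by
          apply mul_le_mul (hEbound t ht) (by rwa [norm_sub_rev]) (norm_nonneg _) hK.le
      _ ≤ ε / 4 := by
          have hfrac : (L + K) * (ε / (4 * (L + K))) = ε / 4 := by field_simp
          have hq : (0:ℝ) ≤ ε / (4 * (L + K)) := by positivity
          nlinarith [mul_le_mul_of_nonneg_right (show K ≤ L + K by linarith) hq]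
  calc ‖((C Δt) ^ n) u - E t u‖
      = ‖(((C Δt) ^ n) u - ((C Δt) ^ n) v) + (((C Δt) ^ n) v - E ((n : ℝ) * Δt) v)
          + (E ((n : ℝ) * Δt) v - E t v) + (E t v - E t u)‖ := by abel_nf
    _ ≤ ‖(((C Δt) ^ n) u - ((C Δt) ^ n) v) + (((C Δt) ^ n) v - E ((n : ℝ) * Δt) v)
          + (E ((n : ℝ) * Δt) v - E t v)‖ + ‖E t v - E t u‖ := norm_add_le _ _
    _ ≤ ‖(((C Δt) ^ n) u - ((C Δt) ^ n) v) + (((C Δt) ^ n) v - E ((n : ℝ) * Δt) v)‖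
          + ‖E ((n : ℝ) * Δt) v - E t v‖ + ‖E t v - E t u‖ := by
            gcongr; exact norm_add_le _ _
    _ ≤ ‖((C Δt) ^ n) u - ((C Δt) ^ n) v‖ + ‖((C Δt) ^ n) v - E ((n : ℝ) * Δt) v‖
          + ‖E ((n : ℝ) * Δt) v - E t v‖ + ‖E t v - E t u‖ := by
            gcongr; exact norm_add_le _ _
    _ ≤ ε / 4 + ε / 4 + ε / 4 + ε / 4 := by
        gcongr
    _ = ε := by ring
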